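/- arXiv:0809.1353 — 2 statements merged into one kernel-verified Lean document; each statement's English description precedes it below -/
import Mathlib

section
/- Let (x, c, η) with x ≥ 0, c ≥ 0, η ≥ 0 satisfy η < H(F⁻¹(x, c)). Then the partial derivative of G with respect to its third argument exists at (x, c, η) and equals ∂G/∂η (x, c, η) = − φ(G(x, c, η)). -/
/-!
`H` and `F(·, c)` are primitives of continuous functions that are positive on `[D, ∞)`, hence
continuous and strictly increasing there; the integrand of `F(·, c)` is moreover `≥ 1`, so
`F(·, c)` reaches every `x ≥ 0` and `F⁻¹(x, c) ≥ D`. By the intermediate value theorem,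
`H(F⁻¹(x, c)) − η ∈ (0, H(F⁻¹(x, c))]` equals `H z` for some `z > D`. Near `H z` the inverse of
a continuous strictly increasing function is monotone and maps a neighbourhood onto a
neighbourhood, hence continuous, so the inverse function theorem gives `(H⁻¹)'(H z) = φ z`, and the
chain rule through `u ↦ H(F⁻¹(x, c)) − u` gives `−φ(G(x, c, η))`.
-/

open MeasureTheory

/-- `H(x) = ∫_D^x dr / φ(r)`. -/
noncomputable def Hfun (D : ℝ) (φ : ℝ → ℝ) (x : ℝ) : ℝ := ∫ r in D..x, 1 / φ r

/-- `H⁻¹ : [0, I) → [D, ∞)`, the inverse of `H` on `[D, ∞)`. -/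
noncomputable def Hinv (D : ℝ) (φ : ℝ → ℝ) (y : ℝ) : ℝ :=
  Function.invFunOn (Hfun D φ) (Set.Ici D) y

/-- `F(x, c) = ∫_D^x exp(c ∫_D^t ψ(r) dr) dt`. -/
noncomputable def Ffun (D : ℝ) (ψ : ℝ → ℝ) (x c : ℝ) : ℝ :=
  ∫ t in D..x, Real.exp (c * ∫ r in D..t, ψ r)

/-- `F⁻¹(·, c) : [0, ∞) → [D, ∞)`, the inverse of `F(·, c)` on `[D, ∞)`. -/
noncomputable def Finv (D : ℝ) (ψ : ℝ → ℝ) (y c : ℝ) : ℝ :=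
  Function.invFunOn (fun x => Ffun D ψ x c) (Set.Ici D) y

/-- `G(x, c, η) = H⁻¹(H(F⁻¹(x, c)) − η)`. -/
noncomputable def Gfun (D : ℝ) (φ ψ : ℝ → ℝ) (x c η : ℝ) : ℝ :=
  Hinv D φ (Hfun D φ (Finv D ψ x c) - η)

/-- The domain `𝒢 = {(x, c, η) ∈ [0, ∞)³ : η ≤ H(F⁻¹(x, c))}` of `G`. -/
def Gset (D : ℝ) (φ ψ : ℝ → ℝ) : Set (ℝ × ℝ × ℝ) :=
  {p | 0 ≤ p.1 ∧ 0 ≤ p.2.1 ∧ 0 ≤ p.2.2 ∧ p.2.2 ≤ Hfun D φ (Finv D ψ p.1 p.2.1)}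

open Set Filter Topology

section Primitive

variable {E : Type*} [NormedAddCommGroup E] [NormedSpace ℝ E] {g : ℝ → E} {a : ℝ}

theorem continuousOn_primitive_Ici (hg : ContinuousOn g (Ici a)) :
    ContinuousOn (fun x => ∫ t in a..x, g t) (Ici a) := by
  intro w hw
  have haw : a ≤ w + 1 := by linarith [mem_Ici.1 hw]
  have hint : IntegrableOn g (uIcc a (w + 1)) :=
    (hg.mono (by rw [uIcc_of_le haw]; exact Icc_subset_Ici_self)).integrableOn_compact
      isCompact_uIcc
  have hIcc : Icc a (w + 1) ∈ 𝓝[Ici a] w := by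
    rw [← Ici_inter_Iic]
    exact inter_mem_nhdsWithin _ (Iic_mem_nhds (by linarith))
  refine ((intervalIntegral.continuousOn_primitive_interval hint) w ?_).mono_of_mem_nhdsWithin ?_
  · rw [uIcc_of_le haw]; exact ⟨hw, by linarith⟩
  · rwa [uIcc_of_le haw]

theorem hasDerivAt_primitive_of_continuousOn_Ici [CompleteSpace E] (hg : ContinuousOn g (Ici a))
    {z : ℝ} (hz : a < z) : HasDerivAt (fun x => ∫ t in a..x, g t) (g z) z :=
  intervalIntegral.integral_hasDerivAt_right
    ((hg.mono fun _ ht => le_trans (le_min le_rfl hz.le) ht.1).intervalIntegrable)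
    ((hg.mono Ioi_subset_Ici_self).stronglyMeasurableAtFilter isOpen_Ioi z hz)
    (hg.continuousAt (Ici_mem_nhds hz))

end Primitive

section RealPrimitive

variable {g : ℝ → ℝ} {a : ℝ}

theorem strictMonoOn_primitive_Ici (hg : ContinuousOn g (Ici a))
    (hpos : ∀ t ∈ Ici a, 0 < g t) : StrictMonoOn (fun x => ∫ t in a..x, g t) (Ici a) := by
  refine strictMonoOn_of_deriv_pos (convex_Ici a) (continuousOn_primitive_Ici hg) fun z hz => ?_
  rw [interior_Ici] at hz
  rw [(hasDerivAt_primitive_of_continuousOn_Ici hg hz).deriv]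
  exact hpos z (mem_Ioi.1 hz).le

theorem surjOn_primitive_Ici_of_one_le (hg : ContinuousOn g (Ici a))
    (hone : ∀ t ∈ Ici a, 1 ≤ g t) : SurjOn (fun x => ∫ t in a..x, g t) (Ici a) (Ici 0) := by
  intro y (hy : 0 ≤ y)
  have haT : a ≤ a + y := by linarith
  have hgIcc : ContinuousOn g (Icc a (a + y)) := hg.mono Icc_subset_Ici_self
  have hyT : y ≤ ∫ t in a..a + y, g t := by
    calc y = ∫ _ in a..a + y, (1 : ℝ) := by simp
      _ ≤ ∫ t in a..a + y, g t :=
        intervalIntegral.integral_mono_on haT intervalIntegrable_const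
          (hgIcc.intervalIntegrable_of_Icc haT) fun t ht => hone t ht.1
  have hcont : ContinuousOn (fun x => ∫ t in a..x, g t) (Icc a (a + y)) :=
    (continuousOn_primitive_Ici hg).mono Icc_subset_Ici_self
  obtain ⟨x, hx, hgx⟩ := intermediate_value_Icc haT hcont
    (by simpa using (⟨hy, hyT⟩ : y ∈ Icc 0 (∫ t in a..a + y, g t)))
  exact ⟨x, hx.1, hgx⟩

end RealPrimitive

section InverseFunction

variable {f : ℝ → ℝ} {s : Set ℝ} {z : ℝ}

theorem StrictMonoOn.image_mem_nhds_of_continuousOn (hmono : StrictMonoOn f s)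
    (hcont : ContinuousOn f s) (hs : s ∈ 𝓝 z) : f '' s ∈ 𝓝 (f z) := by
  obtain ⟨ε, hε, hball⟩ := Metric.nhds_basis_closedBall.mem_iff.1 hs
  rw [Real.closedBall_eq_Icc] at hball
  have hl : z - ε ∈ s := hball ⟨le_rfl, by linarith⟩
  have hu : z + ε ∈ s := hball ⟨by linarith, le_rfl⟩
  have hzs : z ∈ s := mem_of_mem_nhds hs
  refine mem_of_superset (Icc_mem_nhds (hmono hl hzs (by linarith)) (hmono hzs hu (by linarith)))
    ?_
  calc Icc (f (z - ε)) (f (z + ε)) ⊆ f '' Icc (z - ε) (z + ε) :=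
        intermediate_value_Icc (by linarith) (hcont.mono hball)
    _ ⊆ f '' s := image_mono hball

theorem StrictMonoOn.hasDerivAt_invFunOn (hmono : StrictMonoOn f s) (hcont : ContinuousOn f s)
    (hs : s ∈ 𝓝 z) {f' : ℝ} (hf : HasDerivAt f f' z) (hf' : f' ≠ 0) :
    HasDerivAt (Function.invFunOn f s) f'⁻¹ (f z) := by
  have hleft : LeftInvOn (Function.invFunOn f s) f s := hmono.injOn.leftInvOn_invFunOn
  have himage : f '' s ∈ 𝓝 (f z) := hmono.image_mem_nhds_of_continuousOn hcont hs
  have hright : ∀ y ∈ f '' s, f (Function.invFunOn f s y) = y := fun y hy =>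
    Function.invFunOn_eq hy
  have hinv_mono : MonotoneOn (Function.invFunOn f s) (f '' s) := by
    rintro _ ⟨u, hu, rfl⟩ _ ⟨v, hv, rfl⟩ huv
    rw [hleft hu, hleft hv]
    exact (hmono.le_iff_le hu hv).1 huv
  have hinv_cont : ContinuousAt (Function.invFunOn f s) (f z) := by
    refine continuousAt_of_monotoneOn_of_image_mem_nhds hinv_mono himage ?_
    rwa [hleft.image_image, hleft (mem_of_mem_nhds hs)]
  refine HasDerivAt.of_local_left_inverse hinv_cont ?_ hf' (eventually_of_mem himage hright)
  rwa [hleft (mem_of_mem_nhds hs)]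

end InverseFunction

section Hfun

variable {D : ℝ} {φ : ℝ → ℝ} (hφc : ContinuousOn φ (Ici D)) (hφpos : ∀ r ∈ Ici D, 0 < φ r)
include hφc hφpos

theorem continuousOn_one_div_of_pos : ContinuousOn (fun r => 1 / φ r) (Ici D) :=
  continuousOn_const.div hφc fun r hr => (hφpos r hr).ne'

theorem Hfun_strictMonoOn : StrictMonoOn (Hfun D φ) (Ici D) :=
  strictMonoOn_primitive_Ici (continuousOn_one_div_of_pos hφc hφpos) fun r hr =>
    one_div_pos.2 (hφpos r hr)

theorem Hinv_Hfun {z : ℝ} (hz : z ∈ Ici D) : Hinv D φ (Hfun D φ z) = z :=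
  (Hfun_strictMonoOn hφc hφpos).injOn.leftInvOn_invFunOn hz

theorem exists_Hfun_eq {b y : ℝ} (hb : b ∈ Ici D) (hy : 0 < y) (hyb : y ≤ Hfun D φ b) :
    ∃ z, D < z ∧ Hfun D φ z = y := by
  have hcont : ContinuousOn (Hfun D φ) (Icc D b) :=
    (continuousOn_primitive_Ici (continuousOn_one_div_of_pos hφc hφpos)).mono Icc_subset_Ici_self
  have hHD : Hfun D φ D = 0 := intervalIntegral.integral_same
  obtain ⟨z, hz, hHz⟩ := intermediate_value_Icc hb hcont (by rw [hHD]; exact ⟨hy.le, hyb⟩)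
  refine ⟨z, hz.1.lt_of_ne ?_, hHz⟩
  rintro rfl
  exact hy.ne (hHD ▸ hHz)

theorem hasDerivAt_Hinv {z : ℝ} (hz : D < z) : HasDerivAt (Hinv D φ) (φ z) (Hfun D φ z) := by
  have hder : HasDerivAt (Hfun D φ) (1 / φ z) z :=
    hasDerivAt_primitive_of_continuousOn_Ici (continuousOn_one_div_of_pos hφc hφpos) hz
  have hinv := (Hfun_strictMonoOn hφc hφpos).hasDerivAt_invFunOn
    (continuousOn_primitive_Ici (continuousOn_one_div_of_pos hφc hφpos)) (Ici_mem_nhds hz) hder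
    (one_div_pos.2 (hφpos z hz.le)).ne'
  rw [one_div, inv_inv] at hinv
  exact hinv

end Hfun

theorem Finv_mem_Ici {D : ℝ} {ψ : ℝ → ℝ} (hψc : ContinuousOn ψ (Ici D))
    (hψnn : ∀ r ∈ Ici D, 0 ≤ ψ r) {x c : ℝ} (hx : 0 ≤ x) (hc : 0 ≤ c) :
    Finv D ψ x c ∈ Ici D := by
  have hcont : ContinuousOn (fun t => Real.exp (c * ∫ r in D..t, ψ r)) (Ici D) :=
    Real.continuous_exp.comp_continuousOn (continuousOn_const.mul (continuousOn_primitive_Ici hψc))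
  have hone : ∀ t ∈ Ici D, 1 ≤ Real.exp (c * ∫ r in D..t, ψ r) := fun t ht =>
    Real.one_le_exp (mul_nonneg hc
      (intervalIntegral.integral_nonneg ht fun r hr => hψnn r hr.1))
  exact Function.invFunOn_mem (surjOn_primitive_Ici_of_one_le hcont hone (mem_Ici.2 hx))

theorem stmt_7_general (D : ℝ) (φ ψ : ℝ → ℝ)
    (hφc : ContinuousOn φ (Set.Ici D)) (hφpos : ∀ r ∈ Set.Ici D, 0 < φ r)
    (hψc : ContinuousOn ψ (Set.Ici D)) (hψnn : ∀ r ∈ Set.Ici D, 0 ≤ ψ r)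
    (x c η : ℝ) (hx : 0 ≤ x) (hc : 0 ≤ c) (hη : 0 ≤ η)
    (hlt : η < Hfun D φ (Finv D ψ x c)) :
    HasDerivAt (fun u => Gfun D φ ψ x c u) (-(φ (Gfun D φ ψ x c η))) η := by
  have hb : Finv D ψ x c ∈ Ici D := Finv_mem_Ici hψc hψnn hx hc
  obtain ⟨z, hz, hHz⟩ := exists_Hfun_eq hφc hφpos hb (sub_pos.2 hlt) (sub_le_self _ hη)
  have hG : Gfun D φ ψ x c η = z := by
    rw [Gfun, ← hHz, Hinv_Hfun hφc hφpos hz.le]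
  have hHinv : HasDerivAt (Hinv D φ) (φ z) (Hfun D φ (Finv D ψ x c) - η) :=
    hHz ▸ hasDerivAt_Hinv hφc hφpos hz
  rw [hG, ← mul_neg_one]
  exact hHinv.comp η ((hasDerivAt_id η).const_sub _)

/-- If `x ≥ 0`, `c ≥ 0`, `η ≥ 0` and `η < H(F⁻¹(x, c))`, then the partial
derivative of `G` with respect to its third argument exists at `(x, c, η)` and equals
`∂G/∂η (x, c, η) = − φ(G(x, c, η))`. -/
theorem stmt_7 (D : ℝ) (hD : 0 ≤ D) (φ ψ : ℝ → ℝ)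
    (hφc : ContinuousOn φ (Set.Ici D)) (hφpos : ∀ r ∈ Set.Ici D, 0 < φ r)
    (hψc : ContinuousOn ψ (Set.Ici D)) (hψnn : ∀ r ∈ Set.Ici D, 0 ≤ ψ r)
    (x c η : ℝ) (hx : 0 ≤ x) (hc : 0 ≤ c) (hη : 0 ≤ η)
    (hlt : η < Hfun D φ (Finv D ψ x c)) :
    HasDerivAt (fun u => Gfun D φ ψ x c u) (-(φ (Gfun D φ ψ x c η))) η :=
  stmt_7_general D φ ψ hφc hφpos hψc hψnn x c η hx hc hη hlt
end

section
/- Fix D ≥ 0 and a real number a with 0 ≤ a < e^{−D}. Fix T > 0 and let η : [0, T] → ℝ be continuous and nondecreasing with η(0) = 0 and η(T) ≤ a. Define x_t = − ln( e^{−D} − a + η(t) ) for t ∈ [0, T]. Then for every t ∈ [0, T], x_t = x_T + ∫_{(t, T]} e^{x_s} dη(s), where the integral is the Lebesgue–Stieltjes integral with respect to the measure induced by η on [0, T]. -/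
open MeasureTheory Set

/-! The substitution `y = η s` turns the Stieltjes integral into the Lebesgue integral
`∫_{η t}^{η T} dy / (e^{-D} - a + y) = x_t - x_T`. It is justified because a continuous
Stieltjes function pushes its measure on `(t, T]` forward to Lebesgue measure on `(η t, η T]`. -/

theorem Monotone.exists_preimage_Iic_inter_Ioc_eq_Ioc {f : ℝ → ℝ} (hf : Monotone f)
    (hfc : Continuous f) {t T y : ℝ} (htT : t ≤ T) (hy : f t ≤ y) :
    ∃ β ∈ Icc t T, f β = min y (f T) ∧ f ⁻¹' Iic y ∩ Ioc t T = Ioc t β := by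
  obtain ⟨β, ⟨⟨htβ, hβT⟩, hβy⟩, hβmax⟩ : ∃ β, IsGreatest (Icc t T ∩ f ⁻¹' Iic y) β :=
    (isCompact_Icc.inter_right (isClosed_Iic.preimage hfc)).exists_isGreatest
      ⟨t, ⟨le_rfl, htT⟩, hy⟩
  refine ⟨β, ⟨htβ, hβT⟩, ?_, ?_⟩
  · -- a point of `[β, T]` at level `min y (f T)` lies in the set, so it is `β` itself
    obtain ⟨γ, ⟨hβγ, hγT⟩, hγ⟩ := intermediate_value_Icc hβT hfc.continuousOn
      (show min y (f T) ∈ Icc (f β) (f T) from ⟨le_min hβy (hf hβT), min_le_right _ _⟩)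
    have hγβ : γ ≤ β := hβmax ⟨⟨htβ.trans hβγ, hγT⟩, hγ.trans_le (min_le_left _ _)⟩
    rwa [le_antisymm hγβ hβγ] at hγ
  · ext s
    exact ⟨fun ⟨hsy, hts, hsT⟩ ↦ ⟨hts, hβmax ⟨⟨hts.le, hsT⟩, hsy⟩⟩,
      fun ⟨hts, hsβ⟩ ↦ ⟨(hf hsβ).trans hβy, hts, hsβ.trans hβT⟩⟩

namespace StieltjesFunction

variable (f : StieltjesFunction ℝ)

theorem map_measure_restrict_Ioc (hfc : Continuous f) {t T : ℝ} (htT : t ≤ T) :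
    (f.measure.restrict (Ioc t T)).map f = volume.restrict (Ioc (f t) (f T)) := by
  have : IsFiniteMeasure (f.measure.restrict (Ioc t T)) :=
    ⟨by simp [f.measure_Ioc]⟩
  refine Measure.ext_of_Iic _ _ fun y ↦ ?_
  rw [Measure.map_apply hfc.measurable measurableSet_Iic,
    Measure.restrict_apply' measurableSet_Ioc, Measure.restrict_apply' measurableSet_Ioc,
    inter_comm (Iic y), Ioc_inter_Iic, Real.volume_Ioc]
  rcases lt_or_ge y (f t) with hy | hy
  · have hempty : f ⁻¹' Iic y ∩ Ioc t T = ∅ :=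
      eq_empty_of_forall_notMem fun s ⟨hsy, hts, _⟩ ↦ (hy.trans_le (f.mono hts.le)).not_ge hsy
    rw [hempty, measure_empty, eq_comm, ENNReal.ofReal_eq_zero]
    linarith [min_le_right (f T) y]
  · obtain ⟨β, -, hβ, hset⟩ := f.mono.exists_preimage_Iic_inter_Ioc_eq_Ioc hfc htT hy
    rw [hset, f.measure_Ioc, hβ, min_comm]

theorem setIntegral_comp_Ioc {E : Type*} [NormedAddCommGroup E] [NormedSpace ℝ E]
    (hfc : Continuous f) {t T : ℝ} (htT : t ≤ T) {g : ℝ → E}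
    (hg : AEStronglyMeasurable g (volume.restrict (Ioc (f t) (f T)))) :
    ∫ s in Ioc t T, g (f s) ∂f.measure = ∫ y in Ioc (f t) (f T), g y := by
  rw [← f.map_measure_restrict_Ioc hfc htT] at hg ⊢
  exact (integral_map hfc.measurable.aemeasurable hg).symm

end StieltjesFunction

theorem setIntegral_Ioc_inv_add {c u v : ℝ} (huv : u ≤ v) (hu : 0 < c + u) :
    ∫ y in Ioc u v, (c + y)⁻¹ = Real.log (c + v) - Real.log (c + u) := by
  have hv : 0 < c + v := by linarith
  rw [← intervalIntegral.integral_of_le huv,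
    intervalIntegral.integral_comp_add_left (fun x ↦ x⁻¹) c, integral_inv_of_pos hu hv,
    Real.log_div hv.ne' hu.ne']

theorem stmt_11_general (D a T : ℝ) (ha' : a < Real.exp (-D))
    (η : StieltjesFunction ℝ) (hηc : Continuous η) (hη0 : η 0 = 0) :
    ∀ t ∈ Set.Icc 0 T,
      -Real.log (Real.exp (-D) - a + η t) =
        -Real.log (Real.exp (-D) - a + η T) +
          ∫ s in Set.Ioc t T,
            Real.exp (-Real.log (Real.exp (-D) - a + η s)) ∂η.measure := by
  rintro t ⟨ht0, htT⟩
  set c := Real.exp (-D) - a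
  have hpos : ∀ s, 0 ≤ s → 0 < c + η s := fun s hs ↦ by
    have : η 0 ≤ η s := η.mono hs
    linarith [sub_pos.mpr ha']
  have hexp : ∀ s ∈ Ioc t T, Real.exp (-Real.log (c + η s)) = (c + η s)⁻¹ := fun s hs ↦ by
    rw [Real.exp_neg, Real.exp_log (hpos s (ht0.trans hs.1.le))]
  rw [setIntegral_congr_fun measurableSet_Ioc hexp,
    η.setIntegral_comp_Ioc (g := fun y ↦ (c + y)⁻¹) hηc htT (by fun_prop),
    setIntegral_Ioc_inv_add (η.mono htT) (hpos t ht0)]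
  ring

/-- Fix `D ≥ 0` and `0 ≤ a < e^{−D}`, `T > 0`, and a continuous nondecreasing
(Stieltjes) function `η` with `η 0 = 0` and `η T ≤ a`. Setting
`x_t = − ln(e^{−D} − a + η t)`, for every `t ∈ [0, T]` one has
`x_t = x_T + ∫_{(t, T]} e^{x_s} dη(s)` (a Lebesgue–Stieltjes integral with respect to the
measure induced by `η`). -/
theorem stmt_11 (D a T : ℝ) (hD : 0 ≤ D) (ha : 0 ≤ a) (ha' : a < Real.exp (-D)) (hT : 0 < T)
    (η : StieltjesFunction ℝ) (hηc : Continuous η) (hη0 : η 0 = 0) (hηT : η T ≤ a) :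
    ∀ t ∈ Set.Icc 0 T,
      -Real.log (Real.exp (-D) - a + η t) =
        -Real.log (Real.exp (-D) - a + η T) +
          ∫ s in Set.Ioc t T,
            Real.exp (-Real.log (Real.exp (-D) - a + η s)) ∂η.measure :=
  stmt_11_general D a T ha' η hηc hη0
end
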